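/- For every μ > 0, t > 0 and every z ∈ ℂ, the regularized Gamma function satisfies the functional equation μ Γ_{μ,t}(z+1) = z Γ_{μ,t}(z) − (1/t) Γ_{μ,t}′(z), where Γ_{μ,t}′(z) denotes the complex derivative d/dz Γ_{μ,t}(z) (which exists and equals ∫_ℝ x e^{−μe^x} e^{zx} e^{−x²/(2t)} dx). -/

import Mathlib

/-!
`Γ_{μ,t}(z)` is the complex moment-generating function of `x` under the measure
`e^{-μeˣ - x²/(2t)} dx`. Thanks to the Gaussian factor its real moment-generating function is
finite everywhere, so `Γ_{μ,t}` is entire and can be differentiated under the integral sign.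
For the functional equation, write `F_z(x) = e^{-μeˣ + zx - x²/(2t)}`; then `eˣ F_z = F_{z+1}`, so
`∂ₓ F_z = -μ F_{z+1} + z F_z - (x/t) F_z`, and this derivative integrates to `0` over `ℝ` because
`F_z` is integrable.
-/

open MeasureTheory Complex Real ProbabilityTheory
open scoped NNReal

/-- The regularized Gamma function `Γ_{μ,t}(z) = ∫_ℝ e^{-μe^x} e^{zx} e^{-x²/(2t)} dx`. -/
noncomputable def regGamma (μ t : ℝ) (z : ℂ) : ℂ :=
  ∫ x : ℝ, Complex.exp ((-(μ * Real.exp x) : ℝ) : ℂ) * Complex.exp (z * (x : ℂ)) *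
    Complex.exp ((-(x ^ 2 / (2 * t)) : ℝ) : ℂ)

lemma integrable_exp_mul_sub_sq_div {t : ℝ} (ht : 0 < t) (s : ℝ) :
    Integrable fun x : ℝ => rexp (s * x - x ^ 2 / (2 * t)) := by
  have hb : 0 < (((2 * t)⁻¹ : ℝ) : ℂ).re := by simpa using ht
  refine (integrable_cexp_quadratic hb s 0).norm.congr (ae_of_all _ fun x => ?_)
  have hexponent : -(((2 * t)⁻¹ : ℝ) : ℂ) * x ^ 2 + s * x + 0
      = ((s * x - x ^ 2 / (2 * t) : ℝ) : ℂ) := by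
    push_cast
    ring
  dsimp only
  rw [hexponent, Complex.norm_exp_ofReal]

noncomputable def regGammaWeight (μ t x : ℝ) : ℝ≥0 :=
  ⟨rexp (-(μ * rexp x) - x ^ 2 / (2 * t)), (exp_pos _).le⟩

noncomputable def regGammaMeasure (μ t : ℝ) : Measure ℝ :=
  volume.withDensity fun x => regGammaWeight μ t x

noncomputable def regGammaIntegrand (μ t : ℝ) (z : ℂ) (x : ℝ) : ℂ :=
  cexp ((-(μ * rexp x) : ℝ) : ℂ) * cexp (z * x) * cexp ((-(x ^ 2 / (2 * t)) : ℝ) : ℂ)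

section

variable {μ t : ℝ}

lemma measurable_regGammaWeight : Measurable (regGammaWeight μ t) :=
  (by fun_prop : Continuous fun x => rexp (-(μ * rexp x) - x ^ 2 / (2 * t))).measurable.subtype_mk

@[simp]
lemma coe_regGammaWeight (x : ℝ) :
    (regGammaWeight μ t x : ℝ) = rexp (-(μ * rexp x) - x ^ 2 / (2 * t)) := rfl

lemma regGammaWeight_smul (z : ℂ) (x : ℝ) :
    regGammaWeight μ t x • cexp (z * x) = regGammaIntegrand μ t z x := by
  rw [NNReal.smul_def, Complex.real_smul, regGammaIntegrand, coe_regGammaWeight, ofReal_exp,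
    sub_eq_add_neg, ofReal_add, Complex.exp_add]
  ring

lemma regGamma_eq_complexMGF : regGamma μ t = complexMGF id (regGammaMeasure μ t) := by
  ext z
  simp only [complexMGF, regGammaMeasure,
    integral_withDensity_eq_integral_smul measurable_regGammaWeight, id, regGammaWeight_smul]
  rfl

lemma integrableExpSet_regGammaMeasure (hμ : 0 ≤ μ) (ht : 0 < t) :
    integrableExpSet id (regGammaMeasure μ t) = Set.univ := by
  refine Set.eq_univ_of_forall fun s => ?_
  change Integrable _ _
  rw [regGammaMeasure, integrable_withDensity_iff_integrable_smul measurable_regGammaWeight]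
  simp only [NNReal.smul_def, smul_eq_mul, coe_regGammaWeight, id, ← Real.exp_add]
  refine (integrable_exp_mul_sub_sq_div ht s).mono' (by fun_prop) (ae_of_all _ fun x => ?_)
  rw [Real.norm_of_nonneg (exp_pos _).le]
  gcongr
  nlinarith [exp_pos x]

lemma re_mem_interior_integrableExpSet_regGammaMeasure (hμ : 0 ≤ μ) (ht : 0 < t) (z : ℂ) :
    z.re ∈ interior (integrableExpSet id (regGammaMeasure μ t)) := by
  simp [integrableExpSet_regGammaMeasure hμ ht]

lemma integrable_regGammaIntegrand (hμ : 0 ≤ μ) (ht : 0 < t) (z : ℂ) :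
    Integrable (regGammaIntegrand μ t z) := by
  have h := integrable_cexp_mul_of_re_mem_interior_integrableExpSet
    (re_mem_interior_integrableExpSet_regGammaMeasure hμ ht z)
  rw [regGammaMeasure, integrable_withDensity_iff_integrable_smul measurable_regGammaWeight] at h
  simpa only [id, regGammaWeight_smul] using h

lemma integrable_ofReal_mul_regGammaIntegrand (hμ : 0 ≤ μ) (ht : 0 < t) (z : ℂ) :
    Integrable fun x : ℝ => (x : ℂ) * regGammaIntegrand μ t z x := by
  have h := integrable_pow_mul_cexp_of_re_mem_interior_integrableExpSet
    (re_mem_interior_integrableExpSet_regGammaMeasure hμ ht z) 1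
  rw [regGammaMeasure, integrable_withDensity_iff_integrable_smul measurable_regGammaWeight] at h
  simpa only [id, pow_one, smul_mul_assoc, ← mul_smul_comm, regGammaWeight_smul] using h

lemma hasDerivAt_regGamma (hμ : 0 ≤ μ) (ht : 0 < t) (z : ℂ) :
    HasDerivAt (regGamma μ t) (∫ x : ℝ, (x : ℂ) * regGammaIntegrand μ t z x) z := by
  have h := hasDerivAt_complexMGF (re_mem_interior_integrableExpSet_regGammaMeasure hμ ht z)
  rw [← regGamma_eq_complexMGF, regGammaMeasure,
    integral_withDensity_eq_integral_smul measurable_regGammaWeight] at h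
  simpa only [id, ← mul_smul_comm, regGammaWeight_smul] using h

lemma regGammaIntegrand_eq_cexp (z : ℂ) (x : ℝ) :
    regGammaIntegrand μ t z x = cexp (((-(μ * rexp x) - x ^ 2 / (2 * t) : ℝ) : ℂ) + z * x) := by
  rw [← regGammaWeight_smul, NNReal.smul_def, Complex.real_smul, coe_regGammaWeight, ofReal_exp,
    Complex.exp_add]

lemma regGammaIntegrand_add_one (z : ℂ) (x : ℝ) :
    regGammaIntegrand μ t (z + 1) x = rexp x * regGammaIntegrand μ t z x := by
  simp only [regGammaIntegrand, add_mul, one_mul, Complex.exp_add, ofReal_exp]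
  ring

lemma hasDerivAt_regGammaIntegrand (z : ℂ) (x : ℝ) :
    HasDerivAt (regGammaIntegrand μ t z)
      (-μ * regGammaIntegrand μ t (z + 1) x + z * regGammaIntegrand μ t z x
        - 1 / t * (x * regGammaIntegrand μ t z x)) x := by
  have hexponent : HasDerivAt (fun x : ℝ => -(μ * rexp x) - x ^ 2 / (2 * t))
      (-(μ * rexp x) - x / t) x := by
    refine (((Real.hasDerivAt_exp x).const_mul μ).fun_neg.fun_sub
      ((hasDerivAt_pow 2 x).div_const (2 * t))).congr_deriv ?_
    norm_num [mul_div_mul_left]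
  have hlinear : HasDerivAt (fun x : ℝ => z * x) z x := by
    simpa using (hasDerivAt_id (x : ℂ)).comp_ofReal.const_mul z
  rw [funext (regGammaIntegrand_eq_cexp z)]
  convert (hexponent.ofReal_comp.fun_add hlinear).cexp using 1
  rw [regGammaIntegrand_add_one, regGammaIntegrand_eq_cexp]
  push_cast
  ring

lemma regGamma_add_one (hμ : 0 ≤ μ) (ht : 0 < t) (z : ℂ) :
    μ * regGamma μ t (z + 1)
      = z * regGamma μ t z - 1 / t * ∫ x : ℝ, (x : ℂ) * regGammaIntegrand μ t z x := by
  have hF := integrable_regGammaIntegrand hμ ht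
  have hxF := integrable_ofReal_mul_regGammaIntegrand hμ ht z
  have hμF := (hF (z + 1)).const_mul (-μ : ℂ)
  have hzF := (hF z).const_mul z
  have h := integral_eq_zero_of_hasDerivAt_of_integrable (hasDerivAt_regGammaIntegrand z)
    ((hμF.fun_add hzF).sub' (hxF.const_mul _)) (hF z)
  rw [integral_sub (hμF.fun_add hzF) (hxF.const_mul _), integral_add hμF hzF, integral_const_mul,
    integral_const_mul, integral_const_mul] at h
  change (μ : ℂ) * ∫ x, regGammaIntegrand μ t (z + 1) x
    = z * (∫ x, regGammaIntegrand μ t z x) - _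
  linear_combination -h

end

/-- For every `μ > 0`, `t > 0` and `z ∈ ℂ`, the complex derivative of `Γ_{μ,t}` at `z`
exists and equals `∫_ℝ x e^{-μe^x} e^{zx} e^{-x²/(2t)} dx`, and the functional equation
`μ Γ_{μ,t}(z+1) = z Γ_{μ,t}(z) - (1/t) Γ_{μ,t}'(z)` holds. -/
theorem regGamma_functional_equation (μ t : ℝ) (hμ : 0 < μ) (ht : 0 < t) (z : ℂ) :
    HasDerivAt (regGamma μ t)
      (∫ x : ℝ, (x : ℂ) * (Complex.exp ((-(μ * Real.exp x) : ℝ) : ℂ) *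
        Complex.exp (z * (x : ℂ)) * Complex.exp ((-(x ^ 2 / (2 * t)) : ℝ) : ℂ))) z ∧
    (μ : ℂ) * regGamma μ t (z + 1)
      = z * regGamma μ t z -
        (1 / (t : ℂ)) * ∫ x : ℝ, (x : ℂ) * (Complex.exp ((-(μ * Real.exp x) : ℝ) : ℂ) *
          Complex.exp (z * (x : ℂ)) * Complex.exp ((-(x ^ 2 / (2 * t)) : ℝ) : ℂ)) :=
  ⟨hasDerivAt_regGamma hμ.le ht z, regGamma_add_one hμ.le ht z⟩
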